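/- arXiv:2303.16170 — 7 statements merged into one kernel-verified Lean document; each statement's English description precedes it below -/
import Mathlib

section
/- Let k be an algebraically closed field of characteristic p > 3. If a homogeneous quartic polynomial f in k[x0,x1,x2] is invariant under the substitution g: (x0,x1,x2) ↦ (x0+x1, x1, x2), then f lies in the subring k[N, x1, x2] where N = ∏_{i=0}^{p-1}(x0 + i·x1); in particular, since deg N = p > 4, f lies in k[x1,x2] and the plane curve V(f) is a union of lines through the point [1:0:0], hence singular. -/
/-!
Write `f` as a polynomial `P` in `x0` over `k[x1, x2]`. Invariance says `P(x0 + x1) = P(x0)`,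
so `P(n • x1) = P(0)` for `n = 0, …, p - 1`. These `p` points are distinct in characteristic
`p`, while `deg P ≤ 4 < p`, so `P` is constant: `f` does not involve `x0`. A quartic form in
`x1, x2` alone, together with its first partials, vanishes at `[1 : 0 : 0]`.
-/

open MvPolynomial

namespace Polynomial

theorem eq_C_eval_zero_of_comp_X_add_C_eq_self {A : Type*} [CommRing A] [IsDomain A] (p : ℕ)
    [CharP A p] {c : A} (hc : c ≠ 0) {P : A[X]} (hP : P.comp (X + C c) = P)
    (hdeg : P.natDegree < p) : P = C (P.eval 0) := by
  have eval_natCast_mul : ∀ n : ℕ, P.eval (n * c) = P.eval 0 := by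
    intro n
    induction n with
    | zero => simp
    | succ n ih =>
      calc P.eval ((n + 1 : ℕ) * c) = (P.comp (X + C c)).eval (n * c) := by
            simp [eval_comp, add_one_mul]
        _ = P.eval 0 := by rw [hP, ih]
  have hinj : Function.Injective fun i : Fin p => ((i : ℕ) : A) * c := fun i j hij =>
    Fin.ext <| CharP.natCast_injOn_Iio A p i.isLt j.isLt (mul_right_cancel₀ hc hij)
  refine eq_of_natDegree_lt_card_of_eval_eq _ _ hinj (fun i => ?_) ?_
  · simp [eval_natCast_mul]
  · simpa using hdeg

end Polynomial

namespace MvPolynomial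

section CommSemiring

variable {R : Type*} [CommSemiring R] {n : ℕ}

theorem finSuccEquiv_aeval_cons_add_X_succ (j : Fin n) (f : MvPolynomial (Fin (n + 1)) R) :
    finSuccEquiv R n (aeval (Fin.cons (X 0 + X j.succ) fun i => X i.succ) f) =
      (finSuccEquiv R n f).comp (Polynomial.X + Polynomial.C (X j)) := by
  rw [Polynomial.comp_eq_aeval]
  change ((finSuccEquiv R n).toAlgHom.comp (aeval _)) f =
    (((Polynomial.aeval _).restrictScalars R).comp (finSuccEquiv R n).toAlgHom) f
  congr 1
  refine algHom_ext fun i => Fin.cases ?_ (fun i => ?_) i <;>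
    simp [finSuccEquiv_X_zero, finSuccEquiv_X_succ]

theorem finSuccEquiv_rename_succ (g : MvPolynomial (Fin n) R) :
    finSuccEquiv R n (rename Fin.succ g) = Polynomial.C g := by
  change ((finSuccEquiv R n).toAlgHom.comp (rename Fin.succ)) g = Polynomial.CAlgHom (R := R) g
  congr 1
  exact algHom_ext fun i => by simp [finSuccEquiv_X_succ]

theorem eval_piSingle_zero_rename_succ (g : MvPolynomial (Fin n) R) :
    eval (Pi.single 0 1) (rename Fin.succ g) = constantCoeff g := by
  rw [eval_rename, ← eval_zero]
  congr 1

/- `rename Fin.succ g` defines the cone over `V(g)` with vertex `[1 : 0 : … : 0]`; the next two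
lemmas say that the vertex lies on it, and is a singular point unless `g` is linear. -/

theorem IsHomogeneous.eval_piSingle_zero_rename_succ_eq_zero {g : MvPolynomial (Fin n) R}
    {d : ℕ} (hg : g.IsHomogeneous d) (hd : d ≠ 0) :
    eval (Pi.single 0 1) (rename Fin.succ g) = 0 := by
  rw [MvPolynomial.eval_piSingle_zero_rename_succ, constantCoeff_eq]
  exact hg.coeff_eq_zero (by simpa using hd.symm)

theorem IsHomogeneous.eval_piSingle_zero_pderiv_rename_succ_eq_zero
    {g : MvPolynomial (Fin n) R} {d : ℕ} (hg : g.IsHomogeneous d) (hd : d ≠ 1)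
    (i : Fin (n + 1)) : eval (Pi.single 0 1) (pderiv i (rename Fin.succ g)) = 0 := by
  induction i using Fin.cases with
  | zero =>
    classical
    rw [pderiv_eq_zero_of_notMem_vars, map_zero]
    intro h
    obtain ⟨j, -, hj⟩ := Finset.mem_image.mp (vars_rename _ _ h)
    exact Fin.succ_ne_zero j hj
  | succ j =>
    rw [pderiv_rename (Fin.succ_injective n), MvPolynomial.eval_piSingle_zero_rename_succ,
      constantCoeff_eq, coeff_pderiv]
    simp [hg.coeff_eq_zero (by simpa using hd.symm : (Finsupp.single j 1).degree ≠ d)]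

end CommSemiring

theorem exists_eq_rename_succ_of_aeval_cons_add_X_succ_eq_self {R : Type*} [CommRing R]
    [IsDomain R] (p : ℕ) [CharP R p] {n : ℕ} (j : Fin n) {f : MvPolynomial (Fin (n + 1)) R}
    (hf : aeval (Fin.cons (X 0 + X j.succ) fun i => X i.succ) f = f) (hdeg : degreeOf 0 f < p) :
    ∃ g, f = rename Fin.succ g := by
  refine ⟨(finSuccEquiv R n f).eval 0, (finSuccEquiv R n).injective ?_⟩
  rw [finSuccEquiv_rename_succ]
  refine Polynomial.eq_C_eval_zero_of_comp_X_add_C_eq_self p (X_ne_zero j) ?_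
    (by rwa [natDegree_finSuccEquiv])
  rw [← finSuccEquiv_aeval_cons_add_X_succ, hf]

end MvPolynomial

theorem stmt_0_general (k : Type*) [Field k] (p : ℕ) [Fact p.Prime]
    [CharP k p] (hp3 : 3 < p)
    (f : MvPolynomial (Fin 3) k) (hf : f.IsHomogeneous 4)
    (hinv : aeval ![X 0 + X 1, X 1, X 2] f = f) :
    f ∈ Algebra.adjoin k
        ({∏ i ∈ Finset.range p, (X 0 + C ((i : k)) * X 1), X 1, X 2} :
          Set (MvPolynomial (Fin 3) k)) ∧
    f ∈ Algebra.adjoin k ({X 1, X 2} : Set (MvPolynomial (Fin 3) k)) ∧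
    eval ![1, 0, 0] f = 0 ∧
    ∀ i : Fin 3, eval ![1, 0, 0] (pderiv i f) = 0 := by
  have hcons : (![X 0 + X 1, X 1, X 2] : Fin 3 → MvPolynomial (Fin 3) k) =
      Fin.cons (X 0 + X (0 : Fin 2).succ) fun i => X i.succ := by
    funext i
    fin_cases i <;> rfl
  have hdeg : degreeOf 0 f < p := by
    have : p ≠ 4 := by rintro rfl; exact absurd Fact.out (by norm_num : ¬ Nat.Prime 4)
    have := (degreeOf_le_totalDegree f 0).trans hf.totalDegree_le
    omega
  obtain ⟨g, rfl⟩ :=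
    exists_eq_rename_succ_of_aeval_cons_add_X_succ_eq_self p 0 (hcons ▸ hinv) hdeg
  have hg := (IsHomogeneous.rename_isHomogeneous_iff (Fin.succ_injective 2)).mp hf
  have hmem :
      rename Fin.succ g ∈ Algebra.adjoin k ({X 1, X 2} : Set (MvPolynomial (Fin 3) k)) := by
    have hrange : Set.range (X ∘ Fin.succ : Fin 2 → MvPolynomial (Fin 3) k) = {X 1, X 2} := by
      ext; simp [Fin.exists_fin_two, eq_comm]
    rw [rename_eq_aeval, ← hrange, ← aeval_range]
    exact AlgHom.mem_range_self _ _
  have hpt : (![1, 0, 0] : Fin 3 → k) = Pi.single 0 1 := by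
    funext i
    fin_cases i <;> rfl
  refine ⟨Algebra.adjoin_mono (Set.subset_insert _ _) hmem, hmem, ?_, fun i => ?_⟩
  · rw [hpt]; exact hg.eval_piSingle_zero_rename_succ_eq_zero (by norm_num)
  · rw [hpt]; exact hg.eval_piSingle_zero_pderiv_rename_succ_eq_zero (by norm_num) i

/-- In characteristic `p > 3`, a homogeneous quartic invariant under
`(x0,x1,x2) ↦ (x0+x1,x1,x2)` lies in `k[N,x1,x2]` with `N = ∏ (x0 + i x1)`, hence in
`k[x1,x2]`, and the curve it defines is singular at `[1:0:0]`. -/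
theorem stmt_0 (k : Type*) [Field k] [IsAlgClosed k] (p : ℕ) [Fact p.Prime]
    [CharP k p] (hp3 : 3 < p)
    (f : MvPolynomial (Fin 3) k) (hf : f.IsHomogeneous 4)
    (hinv : aeval ![X 0 + X 1, X 1, X 2] f = f) :
    f ∈ Algebra.adjoin k
        ({∏ i ∈ Finset.range p, (X 0 + C ((i : k)) * X 1), X 1, X 2} :
          Set (MvPolynomial (Fin 3) k)) ∧
    f ∈ Algebra.adjoin k ({X 1, X 2} : Set (MvPolynomial (Fin 3) k)) ∧
    eval ![1, 0, 0] f = 0 ∧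
    ∀ i : Fin 3, eval ![1, 0, 0] (pderiv i f) = 0 :=
  stmt_0_general k p hp3 f hf hinv
end

section
/- Let k be an algebraically closed field of characteristic 3 and a ∈ k. The projective plane quartic curve defined by x0^2x1^2 + x1^2x2^2 + x0^2x2^2 + a(x0^4 + x1^4 + x2^4) = 0 is smooth if and only if a ∉ F_3 (i.e., a ∉ {0, 1, -1}). -/
/-!
In characteristic 3 we have `2 = -1` and `4 = 1`, so `∂F/∂xᵢ = xᵢ((a + 1)xᵢ² - Σⱼ xⱼ²)`, and by
Euler's identity `F = Σᵢ xᵢ ∂F/∂xᵢ`: the singular points are exactly the nonzero common zeros of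
the partials. At such a point all nonzero coordinates have the same square `c`, and if `m` of
them are nonzero then `(a + 1)c = mc`, so `a + 1 = m ∈ {1, 2, 3}`, i.e. `a ∈ 𝔽₃` (when `c = 0`,
`a + 1 = 0` directly). Conversely `(1:0:0)`, `(1:1:0)` and `(1:1:1)` are singular for
`a = 0, 1, -1`.
-/

open MvPolynomial Finset

section SumOfSquares

variable {k ι : Type*} [Field k] [Fintype ι]

lemma eq_zero_or_eq_card_of_forall_mul_sub_sum_sq_eq_zero [DecidableEq k] {b : k} {p : ι → k}
    (hp : p ≠ 0) (h : ∀ i, p i * (b * p i ^ 2 - ∑ j, p j ^ 2) = 0) :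
    b = 0 ∨ b = #{i | p i ≠ 0} := by
  set s := ∑ j, p j ^ 2
  have hsq : ∀ i, p i ≠ 0 → b * p i ^ 2 = s := fun i hi =>
    sub_eq_zero.mp ((mul_eq_zero.mp (h i)).resolve_left hi)
  have hs : s = ∑ i ∈ {i | p i ≠ 0}, p i ^ 2 := by
    rw [sum_filter_of_ne fun i _ hi => by simpa using hi]
  have hbs : b * s = #{i | p i ≠ 0} * s := by
    rw [← nsmul_eq_mul, ← sum_const, hs, mul_sum]
    exact sum_congr rfl fun i hi => by rw [hsq i (mem_filter.mp hi).2, hs]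
  obtain ⟨i, hi⟩ := Function.ne_iff.mp hp
  by_cases hs0 : s = 0
  · refine Or.inl ((mul_eq_zero.mp ?_).resolve_right (pow_ne_zero 2 hi))
    rw [hsq i hi, hs0]
  · exact Or.inr (mul_right_cancel₀ hs0 hbs)

lemma ite_mul_card_mul_sq_sub_sum_sq_eq_zero [DecidableEq ι] (T : Finset ι) (i : ι) :
    (if i ∈ T then (1 : k) else 0) *
      (#T * (if i ∈ T then (1 : k) else 0) ^ 2 - ∑ j, (if j ∈ T then (1 : k) else 0) ^ 2) = 0 := by
  split_ifs <;> simp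

end SumOfSquares

section Quartic

variable {k : Type*} [Field k]

noncomputable def quartic (a : k) : MvPolynomial (Fin 3) k :=
  X 0 ^ 2 * X 1 ^ 2 + X 1 ^ 2 * X 2 ^ 2 + X 0 ^ 2 * X 2 ^ 2 + C a * (X 0 ^ 4 + X 1 ^ 4 + X 2 ^ 4)

lemma isHomogeneous_quartic (a : k) : (quartic a).IsHomogeneous 4 := by
  have hsq (i j : Fin 3) : (X i ^ 2 * X j ^ 2 : MvPolynomial (Fin 3) k).IsHomogeneous 4 :=
    (isHomogeneous_X_pow i 2).mul (isHomogeneous_X_pow j 2)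
  have h4 (i : Fin 3) : (X i ^ 4 : MvPolynomial (Fin 3) k).IsHomogeneous 4 :=
    isHomogeneous_X_pow i 4
  exact (((hsq 0 1).add (hsq 1 2)).add (hsq 0 2)).add ((((h4 0).add (h4 1)).add (h4 2)).C_mul a)

variable [CharP k 3]

lemma eval_quartic_eq_sum_mul_eval_pderiv (a : k) (p : Fin 3 → k) :
    eval p (quartic a) = ∑ i, p i * eval p (pderiv i (quartic a)) := by
  have h4 : (4 : k) = 1 := by linear_combination CharP.ofNat_eq_zero k 3
  simpa [nsmul_eq_mul, h4] using
    (congrArg (eval p) (isHomogeneous_quartic a).sum_X_mul_pderiv).symm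

lemma eval_pderiv_quartic (a : k) (p : Fin 3 → k) (i : Fin 3) :
    eval p (pderiv i (quartic a)) = p i * ((a + 1) * p i ^ 2 - ∑ j, p j ^ 2) := by
  have h2 : (2 : k) = -1 := by linear_combination CharP.ofNat_eq_zero k 3
  have h4 : (4 : k) = 1 := by linear_combination CharP.ofNat_eq_zero k 3
  fin_cases i <;> simp [quartic, pderiv_X, Fin.sum_univ_three, h2, h4] <;> ring

lemma exists_ne_zero_forall_eval_pderiv_quartic_eq_zero_iff (a : k) :
    (∃ p : Fin 3 → k, p ≠ 0 ∧ ∀ i, eval p (pderiv i (quartic a)) = 0) ↔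
      a = 0 ∨ a = 1 ∨ a = -1 := by
  classical
  have h3 : (3 : k) = 0 := CharP.ofNat_eq_zero k 3
  simp_rw [eval_pderiv_quartic]
  constructor
  · rintro ⟨p, hp, h⟩
    rcases eq_zero_or_eq_card_of_forall_mul_sub_sum_sq_eq_zero hp h with ha | ha
    · exact Or.inr (Or.inr (eq_neg_of_add_eq_zero_left ha))
    · have hcard : #{i | p i ≠ 0} ≤ 3 := (card_filter_le _ _).trans_eq (card_fin 3)
      interval_cases #{i | p i ≠ 0} <;> push_cast at ha
      · exact Or.inr (Or.inr (eq_neg_of_add_eq_zero_left ha))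
      · exact Or.inl (by linear_combination ha)
      · exact Or.inr (Or.inl (by linear_combination ha))
      · exact Or.inr (Or.inr (by linear_combination ha + h3))
  · have hsingular (T : Finset (Fin 3)) (hT : T.Nonempty) (ha : a + 1 = #T) :
        ∃ p : Fin 3 → k, p ≠ 0 ∧ ∀ i, p i * ((a + 1) * p i ^ 2 - ∑ j, p j ^ 2) = 0 := by
      obtain ⟨i, hi⟩ := hT
      refine ⟨fun j => if j ∈ T then 1 else 0, Function.ne_iff.mpr ⟨i, by simp [hi]⟩, ?_⟩
      simpa only [ha] using ite_mul_card_mul_sq_sub_sum_sq_eq_zero T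
    rintro (rfl | rfl | rfl)
    · exact hsingular {0} (singleton_nonempty 0) (by simp)
    · exact hsingular {0, 1} (insert_nonempty 0 {1}) (by norm_num)
    · exact hsingular univ univ_nonempty (by simpa using h3.symm)

end Quartic

theorem stmt_4_general (k : Type*) [Field k] [CharP k 3] (a : k)
    (F : MvPolynomial (Fin 3) k)
    (hF : F = X 0 ^ 2 * X 1 ^ 2 + X 1 ^ 2 * X 2 ^ 2 + X 0 ^ 2 * X 2 ^ 2
        + C a * (X 0 ^ 4 + X 1 ^ 4 + X 2 ^ 4)) :
    (¬ ∃ p : Fin 3 → k, p ≠ 0 ∧ eval p F = 0 ∧ ∀ i, eval p (pderiv i F) = 0) ↔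
      (a ≠ 0 ∧ a ≠ 1 ∧ a ≠ -1) := by
  have hquartic : F = quartic a := hF
  have hcurve (p : Fin 3 → k) (hp : ∀ i, eval p (pderiv i F) = 0) : eval p F = 0 := by
    rw [hquartic] at hp ⊢
    simp [eval_quartic_eq_sum_mul_eval_pderiv, hp]
  have hsingular_iff : (∃ p : Fin 3 → k, p ≠ 0 ∧ eval p F = 0 ∧ ∀ i, eval p (pderiv i F) = 0) ↔
      ∃ p : Fin 3 → k, p ≠ 0 ∧ ∀ i, eval p (pderiv i F) = 0 :=
    exists_congr fun p => ⟨fun ⟨hp, _, h⟩ => ⟨hp, h⟩, fun ⟨hp, h⟩ => ⟨hp, hcurve p h, h⟩⟩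
  rw [hsingular_iff, hquartic, exists_ne_zero_forall_eval_pderiv_quartic_eq_zero_iff]
  tauto

/-- In characteristic 3 the quartic
`x0^2x1^2 + x1^2x2^2 + x0^2x2^2 + a(x0^4+x1^4+x2^4)` defines a smooth plane curve iff
`a ∉ F_3`, i.e. `a ∉ {0,1,-1}`. -/
theorem stmt_4 (k : Type*) [Field k] [IsAlgClosed k] [CharP k 3] (a : k)
    (F : MvPolynomial (Fin 3) k)
    (hF : F = X 0 ^ 2 * X 1 ^ 2 + X 1 ^ 2 * X 2 ^ 2 + X 0 ^ 2 * X 2 ^ 2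
        + C a * (X 0 ^ 4 + X 1 ^ 4 + X 2 ^ 4)) :
    (¬ ∃ p : Fin 3 → k, p ≠ 0 ∧ eval p F = 0 ∧ ∀ i, eval p (pderiv i F) = 0) ↔
      (a ≠ 0 ∧ a ≠ 1 ∧ a ≠ -1) :=
  stmt_4_general k a F hF
end

section
/- Let k be an algebraically closed field of characteristic 3 and c ∈ k. The projective plane quartic curve defined by x2(x0^3 − x0x2^2) + x1^4 + c·x1^2x2^2 = 0 is smooth for every value of c. -/
open MvPolynomial

/-- In characteristic 3 the quartic
`x2(x0^3 - x0 x2^2) + x1^4 + c x1^2 x2^2` is smooth for every `c`. -/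
theorem stmt_5 (k : Type*) [Field k] [IsAlgClosed k] [CharP k 3] (c : k)
    (F : MvPolynomial (Fin 3) k)
    (hF : F = X 2 * (X 0 ^ 3 - X 0 * X 2 ^ 2) + X 1 ^ 4 + C c * X 1 ^ 2 * X 2 ^ 2) :
    ¬ ∃ p : Fin 3 → k, p ≠ 0 ∧ eval p F = 0 ∧ ∀ i, eval p (pderiv i F) = 0 := by
  rintro ⟨p, hp, -, hd⟩
  have h3 : (3:k) = 0 := by exact_mod_cast CharP.cast_eq_zero k 3
  have h0 := hd 0; have h1 := hd 1; have h2 := hd 2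
  simp only [hF, map_add, map_sub, Derivation.leibniz, Derivation.leibniz_pow, pderiv_C,
    pderiv_X, Pi.single_apply, smul_eq_mul, map_mul, map_pow, eval_add, eval_sub, eval_mul,
    eval_pow, eval_C, eval_X, map_zero, map_ofNat, map_nsmul, nsmul_eq_mul,
    if_true, if_pos, mul_one, mul_zero, zero_mul, add_zero, zero_add, sub_zero] at h0 h1 h2
  norm_num [Fin.ext_iff, h3] at h0 h1 h2
  have hp2 : p 2 = 0 := by
    rcases h0 with h | h
    · exact h
    · have : p 2 ^ 2 = 0 := by linear_combination -h + p 0 ^ 2 * h3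
      exact pow_eq_zero_iff (by norm_num) |>.mp this
  rw [hp2] at h1 h2
  have hp1 : p 1 = 0 := by
    have : p 1 ^ 3 = 0 := by linear_combination h1 - p 1 ^ 3 * h3
    exact pow_eq_zero_iff (by norm_num) |>.mp this
  have hp0 : p 0 = 0 := by
    have : p 0 ^ 3 = 0 := by linear_combination h2
    exact pow_eq_zero_iff (by norm_num) |>.mp this
  apply hp
  funext i
  fin_cases i <;> simp [hp0, hp1, hp2]
end

section
/- Let k be an algebraically closed field of characteristic 3 and c ∈ k. The quartic polynomial F = x2(x0^3 − x0x2^2) + x1^4 + c·x1^2x2^2 is invariant under every substitution of the form (x0,x1,x2) ↦ (x0 + λx1 + μx2, x1 − λ^3x2, x2) with λ, μ ∈ k satisfying λ^9 − cλ^3 + λ = 0 and μ^3 − μ + λ^12 + cλ^6 = 0, and these substitutions form a group of order 27. -/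
open MvPolynomial

/-!
In characteristic `3` the cube of a sum is the sum of the cubes, so after substituting, every
monomial of `F` except those in `x₁x₂³` and `x₂⁴` cancels, and the coefficients of these two are
exactly the two defining equations of `(λ, μ)`.

Both equations are separable, their derivatives being the constants `1` and `-1`: there are `9`
values of `λ`, and for each of them `3` values of `μ`.
-/

theorem Set.ncard_setOf_mem_and_mem_fiber {α β : Type*} (A : Finset α) (B : α → Finset β)
    {m : ℕ} (hB : ∀ a ∈ A, (B a).card = m) :
    {x : α × β | x.1 ∈ A ∧ x.2 ∈ B x.1}.ncard = A.card * m := by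
  classical
  have hset : {x : α × β | x.1 ∈ A ∧ x.2 ∈ B x.1} =
      ↑((A.sigma B).map (Equiv.sigmaEquivProd α β).toEmbedding) := by
    ext ⟨a, b⟩
    simp
  rw [hset, Set.ncard_coe_finset, Finset.card_map, Finset.card_sigma, Finset.sum_const_nat hB]

namespace Polynomial

variable {K : Type*} [Field K]

theorem card_roots_toFinset_of_separable [IsAlgClosed K] [DecidableEq K] {f : K[X]}
    (hf : f.Separable) : f.roots.toFinset.card = f.natDegree := by
  rw [Multiset.toFinset_card_of_nodup (nodup_roots hf), IsAlgClosed.card_roots_eq_natDegree]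

theorem derivative_X_pow_sub_X_add_C (p : ℕ) [CharP K p] (a : K) :
    derivative (X ^ p - X + C a : K[X]) = -1 := by
  simp [derivative_X_pow]

theorem natDegree_X_pow_sub_X_add_C {p : ℕ} (hp : 2 ≤ p) (a : K) :
    (X ^ p - X + C a : K[X]).natDegree = p := by
  rw [natDegree_add_C, natDegree_sub_eq_left_of_natDegree_lt] <;> simp; omega

theorem separable_X_pow_sub_X_add_C (p : ℕ) [CharP K p] (a : K) :
    (X ^ p - X + C a : K[X]).Separable := by
  rw [separable_def, derivative_X_pow_sub_X_add_C p]
  exact isCoprime_one_right.neg_right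

theorem derivative_X_pow_sq_sub_C_mul_X_pow_add_X (p : ℕ) [CharP K p] (c : K) :
    derivative (X ^ p ^ 2 - C c * X ^ p + X : K[X]) = 1 := by
  simp [derivative_X_pow]

theorem natDegree_X_pow_sq_sub_C_mul_X_pow_add_X {p : ℕ} (hp : 2 ≤ p) (c : K) :
    (X ^ p ^ 2 - C c * X ^ p + X : K[X]).natDegree = p ^ 2 := by
  have hlt : (C c * X ^ p : K[X]).natDegree < p ^ 2 :=
    (natDegree_C_mul_X_pow_le c p).trans_lt (by nlinarith)
  have hsub : (X ^ p ^ 2 - C c * X ^ p : K[X]).natDegree = p ^ 2 := by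
    rw [natDegree_sub_eq_left_of_natDegree_lt] <;> simp [hlt]
  rw [natDegree_add_eq_left_of_natDegree_lt] <;> simp only [hsub, natDegree_X]
  nlinarith

theorem separable_X_pow_sq_sub_C_mul_X_pow_add_X (p : ℕ) [CharP K p] (c : K) :
    (X ^ p ^ 2 - C c * X ^ p + X : K[X]).Separable := by
  rw [separable_def, derivative_X_pow_sq_sub_C_mul_X_pow_add_X p]
  exact isCoprime_one_right

theorem card_roots_toFinset_X_pow_sub_X_add_C [IsAlgClosed K] [DecidableEq K] {p : ℕ}
    [Fact p.Prime] [CharP K p] (a : K) : (X ^ p - X + C a : K[X]).roots.toFinset.card = p := by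
  rw [card_roots_toFinset_of_separable (separable_X_pow_sub_X_add_C p a),
    natDegree_X_pow_sub_X_add_C (Fact.out : p.Prime).two_le]

theorem card_roots_toFinset_X_pow_sq_sub_C_mul_X_pow_add_X [IsAlgClosed K] [DecidableEq K]
    {p : ℕ} [Fact p.Prime] [CharP K p] (c : K) :
    (X ^ p ^ 2 - C c * X ^ p + X : K[X]).roots.toFinset.card = p ^ 2 := by
  rw [card_roots_toFinset_of_separable (separable_X_pow_sq_sub_C_mul_X_pow_add_X p c),
    natDegree_X_pow_sq_sub_C_mul_X_pow_add_X (Fact.out : p.Prime).two_le]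

end Polynomial

theorem quartic_substitution_eq {A : Type*} [CommRing A] [CharP A 3] {c l m : A}
    (hl : l ^ 9 - c * l ^ 3 + l = 0) (hm : m ^ 3 - m + l ^ 12 + c * l ^ 6 = 0) (x y z : A) :
    z * ((x + l * y + m * z) ^ 3 - (x + l * y + m * z) * z ^ 2) + (y - l ^ 3 * z) ^ 4
        + c * (y - l ^ 3 * z) ^ 2 * z ^ 2 =
      z * (x ^ 3 - x * z ^ 2) + y ^ 4 + c * y ^ 2 * z ^ 2 := by
  have hcube : (x + l * y + m * z) ^ 3 = x ^ 3 + l ^ 3 * y ^ 3 + m ^ 3 * z ^ 3 := by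
    rw [add_pow_char, add_pow_char, mul_pow, mul_pow]
  have h3 : (3 : A) = 0 := by exact_mod_cast CharP.cast_eq_zero A 3
  rw [hcube]
  linear_combination (-y * z ^ 3) * hl + z ^ 4 * hm
    + (-l ^ 9 * y * z ^ 3 - c * l ^ 3 * y * z ^ 3 - l ^ 3 * y ^ 3 * z
      + 2 * l ^ 6 * y ^ 2 * z ^ 2) * h3

/-- In characteristic 3, `x2(x0^3 - x0x2^2) + x1^4 + c x1^2 x2^2` is invariant
under every substitution `(x0,x1,x2) ↦ (x0 + λx1 + μx2, x1 - λ^3 x2, x2)` with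
`λ^9 - cλ^3 + λ = 0` and `μ^3 - μ + λ^12 + cλ^6 = 0`, and there are exactly `27` such
substitutions. -/
theorem stmt_6 (k : Type*) [Field k] [IsAlgClosed k] [CharP k 3] (c : k)
    (F : MvPolynomial (Fin 3) k)
    (hF : F = X 2 * (X 0 ^ 3 - X 0 * X 2 ^ 2) + X 1 ^ 4 + C c * X 1 ^ 2 * X 2 ^ 2) :
    (∀ l m : k, l ^ 9 - c * l ^ 3 + l = 0 → m ^ 3 - m + l ^ 12 + c * l ^ 6 = 0 →
      aeval ![X 0 + C l * X 1 + C m * X 2, X 1 - C (l ^ 3) * X 2, X 2] F = F) ∧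
    Set.ncard {lm : k × k | lm.1 ^ 9 - c * lm.1 ^ 3 + lm.1 = 0 ∧
      lm.2 ^ 3 - lm.2 + lm.1 ^ 12 + c * lm.1 ^ 6 = 0} = 27 := by
  classical
  refine ⟨fun l m hl hm => ?_, ?_⟩
  · have hlC := congrArg (C : k → MvPolynomial (Fin 3) k) hl
    have hmC := congrArg (C : k → MvPolynomial (Fin 3) k) hm
    simp only [map_add, map_sub, map_mul, map_pow, map_zero] at hlC hmC
    subst hF
    simpa using quartic_substitution_eq hlC hmC (X 0) (X 1) (X 2)
  · let roots (f : Polynomial k) := f.roots.toFinset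
    have hset : {lm : k × k | lm.1 ^ 9 - c * lm.1 ^ 3 + lm.1 = 0 ∧
        lm.2 ^ 3 - lm.2 + lm.1 ^ 12 + c * lm.1 ^ 6 = 0} =
        {lm | lm.1 ∈ roots (.X ^ 3 ^ 2 - .C c * .X ^ 3 + .X) ∧
          lm.2 ∈ roots (.X ^ 3 - .X + .C (lm.1 ^ 12 + c * lm.1 ^ 6))} := by
      ext ⟨l, m⟩
      rw [Set.mem_ofPred_eq, Set.mem_ofPred_eq, Multiset.mem_toFinset, Multiset.mem_toFinset,
        Polynomial.mem_roots (Polynomial.separable_X_pow_sq_sub_C_mul_X_pow_add_X 3 c).ne_zero,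
        Polynomial.mem_roots (Polynomial.separable_X_pow_sub_X_add_C 3 _).ne_zero]
      simp [add_assoc]
    have hfiber : ∀ l : k, (roots (.X ^ 3 - .X + .C (l ^ 12 + c * l ^ 6))).card = 3 := fun l =>
      Polynomial.card_roots_toFinset_X_pow_sub_X_add_C _
    have hbase : (roots (.X ^ 3 ^ 2 - .C c * .X ^ 3 + .X)).card = 3 ^ 2 :=
      Polynomial.card_roots_toFinset_X_pow_sq_sub_C_mul_X_pow_add_X c
    rw [hset, Set.ncard_setOf_mem_and_mem_fiber _ _ fun l _ => hfiber l, hbase]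
    norm_num
end

section
/- Over an algebraically closed field k of characteristic 3, the Klein quartic x0^3x1 + x1^3x2 + x2^3x0 = 0 is projectively equivalent to the Fermat quartic x0^4 + x1^4 + x2^4 = 0; concretely, there is an invertible linear change of coordinates over k transforming one equation into a nonzero scalar multiple of the other. -/
open MvPolynomial

/-- Over an algebraically closed field of characteristic 3, the Klein quartic
`x0^3x1 + x1^3x2 + x2^3x0` is projectively equivalent to the Fermat quartic
`x0^4 + x1^4 + x2^4`: some invertible linear change of coordinates takes one to a nonzero
scalar multiple of the other. -/
theorem stmt_9 (k : Type*) [Field k] [IsAlgClosed k] [CharP k 3] :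
    ∃ (A : Matrix (Fin 3) (Fin 3) k) (lam : k), IsUnit A ∧ lam ≠ 0 ∧
      aeval (fun i => ∑ j, C (A i j) * X j)
          (X 0 ^ 3 * X 1 + X 1 ^ 3 * X 2 + X 2 ^ 3 * X 0 : MvPolynomial (Fin 3) k)
        = C lam * (X 0 ^ 4 + X 1 ^ 4 + X 2 ^ 4) := by
  have h3 : (3 : k) = 0 := by exact_mod_cast CharP.cast_eq_zero k 3
  -- a root of x^3 + x^2 + x + 2
  obtain ⟨α, hα⟩ : ∃ α : k, α ^ 3 + α ^ 2 + α + 2 = 0 := by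
    obtain ⟨α, hα⟩ := IsAlgClosed.exists_root
      (Polynomial.X ^ 3 + Polynomial.X ^ 2 + Polynomial.X + Polynomial.C 2 : Polynomial k)
      (by
        have hd : (Polynomial.X ^ 3 + Polynomial.X ^ 2 + Polynomial.X + Polynomial.C 2 :
            Polynomial k).degree = 3 := by compute_degree!
        simp [hd])
    exact ⟨α, by simpa using hα⟩
  set b : k := 1 - α ^ 2 with hb
  refine ⟨Matrix.of ![![α, b, 1], ![1, α, b], ![b, 1, α]], α + 2, ?_, ?_, ?_⟩
  · rw [Matrix.isUnit_iff_isUnit_det, isUnit_iff_ne_zero]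
    intro hdet
    rw [Matrix.det_fin_three] at hdet
    simp only [Matrix.of_apply, Matrix.cons_val', Matrix.cons_val_zero, Matrix.cons_val_one,
      Matrix.head_cons, Matrix.head_fin_const, Matrix.cons_val_fin_one, Matrix.empty_val',
      Matrix.cons_val_two, Matrix.tail_cons] at hdet
    have h1 : (1 : k) = 0 := by
      linear_combination (2*α^2) * hdet + (2 + 2*α + 2*α^2 + α^4 + 2*α^5) * hα
        - (1 + 2*α + 4*α^2 + 5*α^5 + 3*α^6 + α^7) * h3
    exact one_ne_zero h1
  · intro h
    have h1 : (1 : k) = 0 := by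
      linear_combination (α^2 - α + 3) * h - hα - h3
    exact one_ne_zero h1
  · have hM : (C α : MvPolynomial (Fin 3) k) ^ 3 + (C α) ^ 2 + C α + 2 = 0 := by
      have := congrArg (C : k →+* MvPolynomial (Fin 3) k) hα
      push_cast [map_add, map_pow, map_ofNat] at this
      simpa using this
    have h3M : (3 : MvPolynomial (Fin 3) k) = 0 := by
      exact_mod_cast CharP.cast_eq_zero (MvPolynomial (Fin 3) k) 3
    simp only [map_add, map_mul, map_pow, aeval_X]
    simp only [Fin.sum_univ_three, Matrix.of_apply, Matrix.cons_val', Matrix.cons_val_zero,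
      Matrix.cons_val_one, Matrix.head_cons, Matrix.head_fin_const, Matrix.cons_val_fin_one,
      Matrix.empty_val', Matrix.cons_val_two, Matrix.tail_cons]
    rw [hb]
    push_cast [map_sub, map_add, map_one, map_pow, map_ofNat]
    set Ca : MvPolynomial (Fin 3) k := C α with hCa
    set X0 : MvPolynomial (Fin 3) k := X 0
    set X1 : MvPolynomial (Fin 3) k := X 1
    set X2 : MvPolynomial (Fin 3) k := X 2
    linear_combination (Ca^5*X0^3*X1 + Ca^5*X0*X2^3 + Ca^5*X1^3*X2 + (-1)*Ca^4*X0^4 + (-1)*Ca^4*X0^3*X1 + (-3)*Ca^4*X0^2*X1*X2 + (-3)*Ca^4*X0*X1^2*X2 + (-3)*Ca^4*X0*X1*X2^2 + (-1)*Ca^4*X0*X2^3 + (-1)*Ca^4*X1^4 + (-1)*Ca^4*X1^3*X2 + (-1)*Ca^4*X2^4 + Ca^3*X0^4 + (-4)*Ca^3*X0^3*X1 + 2*Ca^3*X0^3*X2 + (-3)*Ca^3*X0^2*X1^2 + 6*Ca^3*X0^2*X1*X2 + (-3)*Ca^3*X0^2*X2^2 + 2*Ca^3*X0*X1^3 + 6*Ca^3*X0*X1^2*X2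 + 6*Ca^3*X0*X1*X2^2 + (-4)*Ca^3*X0*X2^3 + Ca^3*X1^4 + (-4)*Ca^3*X1^3*X2 + (-3)*Ca^3*X1^2*X2^2 + 2*Ca^3*X1*X2^3 + Ca^3*X2^4 + 3*Ca^2*X0^4 + 6*Ca^2*X0^3*X1 + (-3)*Ca^2*X0^3*X2 + 3*Ca^2*X0^2*X1^2 + 12*Ca^2*X0^2*X1*X2 + 3*Ca^2*X0^2*X2^2 + (-3)*Ca^2*X0*X1^3 + 12*Ca^2*X0*X1^2*X2 + 12*Ca^2*X0*X1*X2^2 + 6*Ca^2*X0*X2^3 + 3*Ca^2*X1^4 + 6*Ca^2*X1^3*X2 + 3*Ca^2*X1^2*X2^2 + (-3)*Ca^2*X1*X2^3 + 3*Ca^2*X2^4 + (-2)*Ca*X0^4 + 4*Ca*X0^3*X1 + Ca*X0^3*X2 + 6*Ca*X0^2*X1^2 + (-21)*Ca*X0^2*X1*X2 + 6*Ca*X0^2*X2^2 + Ca*X0*X1^3 + (-21)*Ca*X0*X1^2*X2 + (-21)*Ca*X0*X1*X2^2 + 4*Ca*X0*X2^3 + (-2)*Ca*X1^4 + 4*Ca*X1^3*X2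 + 6*Ca*X1^2*X2^2 + Ca*X1*X2^3 + (-2)*Ca*X2^4 + (-5)*X0^4 + (-11)*X0^3*X1 + (-1)*X0^3*X2 + (-9)*X0^2*X1^2 + (-27)*X0^2*X1*X2 + (-9)*X0^2*X2^2 + (-1)*X0*X1^3 + (-27)*X0*X1^2*X2 + (-27)*X0*X1*X2^2 + (-11)*X0*X2^3 + (-5)*X1^4 + (-11)*X1^3*X2 + (-9)*X1^2*X2^2 + (-1)*X1*X2^3 + (-5)*X2^4) * hM + ((-2)*Ca^2*X0^3*X1 + Ca^2*X0^3*X2 + (-3)*Ca^2*X0^2*X1^2 + 9*Ca^2*X0^2*X1*X2 + (-3)*Ca^2*X0^2*X2^2 + Ca^2*X0*X1^3 + 9*Ca^2*X0*X1^2*X2 + 9*Ca^2*X0*X1*X2^2 + (-2)*Ca^2*X0*X2^3 + (-2)*Ca^2*X1^3*X2 + (-3)*Ca^2*X1^2*X2^2 + Ca^2*X1*X2^3 + 3*Ca*X0^4 + 3*Ca*X0^3*X1 + 2*Ca*X0^2*X1^2 + 28*Ca*X0^2*X1*X2 + 2*Ca*X0^2*X2^2 + 28*Ca*X0*X1^2*X2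 + 28*Ca*X0*X1*X2^2 + 3*Ca*X0*X2^3 + 3*Ca*X1^4 + 3*Ca*X1^3*X2 + 2*Ca*X1^2*X2^2 + 3*Ca*X2^4 + 3*X0^4 + 8*X0^3*X1 + 2*X0^3*X2 + 7*X0^2*X1^2 + 20*X0^2*X1*X2 + 7*X0^2*X2^2 + 2*X0*X1^3 + 20*X0*X1^2*X2 + 20*X0*X1*X2^2 + 8*X0*X2^3 + 3*X1^4 + 8*X1^3*X2 + 7*X1^2*X2^2 + 2*X1*X2^3 + 3*X2^4) * h3M
end

section
/- Let k be an algebraically closed field of characteristic 5 and c ∈ k. The surface in the weighted projective space P(1,1,2,3) defined by y^2 + x^3 + c·t0^4·x + t0t1(t1^4 − t0^4) = 0 is smooth; equivalently, the Weierstrass equation y^2 = −x^3 − c·t0^4·x − t0t1(t1^4 − t0^4) over P^1 defines a smooth surface, since its discriminant Δ = 4c^3t0^12 + 27(t0t1(t1^4−t0^4))^2 has no root of multiplicity ≥ 2 other than possibly a double root at [0:1] when c ≠ 0. -/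
open MvPolynomial

/-- In characteristic 5, the surface in `P(1,1,2,3)` given (with coordinates
`x = X 0` of weight 2, `y = X 1` of weight 3, `t0 = X 2`, `t1 = X 3` of weight 1) by
`y^2 + x^3 + c t0^4 x + t0 t1 (t1^4 - t0^4) = 0` is smooth: the defining polynomial and its
partial derivatives have no common zero other than the origin. -/
theorem stmt_10 (k : Type*) [Field k] [IsAlgClosed k] [CharP k 5] (c : k)
    (F : MvPolynomial (Fin 4) k)
    (hF : F = X 1 ^ 2 + X 0 ^ 3 + C c * X 2 ^ 4 * X 0
        + X 2 * X 3 * (X 3 ^ 4 - X 2 ^ 4)) :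
    ∀ p : Fin 4 → k, eval p F = 0 → (∀ i, eval p (pderiv i F) = 0) → p = 0 := by
  intro p _ hd
  have h5 : (5 : k) = 0 := CharP.cast_eq_zero k 5
  have h2 : (2 : k) ≠ 0 := by
    intro h
    have := (CharP.cast_eq_zero_iff k 5 2).mp (by exact_mod_cast h)
    omega
  have h3 : (3 : k) ≠ 0 := by
    intro h
    have := (CharP.cast_eq_zero_iff k 5 3).mp (by exact_mod_cast h)
    omega
  have h0 := hd 0
  have h1 := hd 1
  have ht0 := hd 2
  have ht1 := hd 3
  simp [hF, pderiv_X_self, pderiv_X_of_ne, Derivation.leibniz, Derivation.leibniz_pow,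
    map_ofNat, smul_eq_mul] at h0 h1 ht0 ht1
  have e1 : p 1 = 0 := h1.resolve_left h2
  have e2 : p 2 = 0 := by
    have h : (p 2) ^ 5 = 0 := by linear_combination -ht1 + p 2 * p 3 ^ 4 * h5
    exact pow_eq_zero_iff (by norm_num) |>.mp h
  have e3 : p 3 = 0 := by
    rw [e2] at ht0
    have h : (p 3) ^ 5 = 0 := by linear_combination ht0
    exact pow_eq_zero_iff (by norm_num) |>.mp h
  have e0 : p 0 = 0 := by
    rw [e2] at h0
    have h : (3 : k) * (p 0) ^ 2 = 0 := by linear_combination h0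
    have := (mul_eq_zero.mp h).resolve_left h3
    exact pow_eq_zero_iff (by norm_num) |>.mp this
  funext i
  fin_cases i <;> simp [e0, e1, e2, e3]
end

section
/- Let k be an algebraically closed field of characteristic 3 with a, b ∈ k. The surface defined by y^2 + x^3 + t0^2x^2 + t0t1^3x + t1^6 + a·t0^3t1^3 + b·t0^5t1 = 0 admits, for each B ∈ k with B^9 + aB^3 + bB = 0, the automorphism (x, y, t0, t1) ↦ (x + B^3t0^2, y, t0, t1 + Bt0), i.e., this substitution preserves the equation; when b ≠ 0 there are exactly 9 such B, forming a group isomorphic to (Z/3)^2 under addition. -/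
/-!
In characteristic 3 cubing is additive. Hence `B ↦ B^9 + aB^3 + bB` is additive, and under the
substitution the cubes `x^3` and `t₁^3` change by `B^9 t₀^6` and `B^3 t₀^3`; expanding, every
other change carries a factor 3, so the equation changes by `t₀^6 (B^9 + aB^3 + bB)`.
The polynomial `X^9 + aX^3 + bX` has derivative `b`, so for `b ≠ 0` it is separable and has
9 distinct roots.
-/

section AdditivePolynomial

open Polynomial

variable {R : Type*} [CommRing R]

noncomputable def additivePoly (a b : R) : R[X] := X ^ 9 + C a * X ^ 3 + C b * X

theorem eval_additivePoly (a b B : R) :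
    (additivePoly a b).eval B = B ^ 9 + a * B ^ 3 + b * B := by
  simp [additivePoly]

theorem natDegree_additivePoly [Nontrivial R] (a b : R) : (additivePoly a b).natDegree = 9 := by
  unfold additivePoly
  compute_degree!

variable [CharP R 3]

theorem additivePoly_add (a b B B' : R) :
    (B + B') ^ 9 + a * (B + B') ^ 3 + b * (B + B') =
      (B ^ 9 + a * B ^ 3 + b * B) + (B' ^ 9 + a * B' ^ 3 + b * B') := by
  rw [show 9 = 3 ^ 2 by rfl, add_pow_char_pow, add_pow_char]
  ring

theorem derivative_additivePoly (a b : R) : derivative (additivePoly a b) = C b := by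
  have h9 : ((9 : ℕ) : R) = 0 := (CharP.cast_eq_zero_iff R 3 9).2 (by norm_num)
  rw [additivePoly, derivative_add, derivative_add, derivative_X_pow, derivative_C_mul_X_pow,
    derivative_C_mul_X, h9, CharP.cast_eq_zero]
  simp

theorem separable_additivePoly {K : Type*} [Field K] [CharP K 3] (a : K) {b : K} (hb : b ≠ 0) :
    (additivePoly a b).Separable := by
  rw [separable_def, derivative_additivePoly]
  exact isCoprime_one_right.of_isCoprime_of_dvd_right
    (isUnit_iff_dvd_one.mp (isUnit_C.mpr hb.isUnit))

theorem ncard_additivePoly_roots {K : Type*} [Field K] [IsAlgClosed K] [CharP K 3] (a : K) {b : K}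
    (hb : b ≠ 0) : {B : K | B ^ 9 + a * B ^ 3 + b * B = 0}.ncard = 9 := by
  have hne : additivePoly a b ≠ 0 :=
    ne_zero_of_natDegree_gt (n := 0) (by rw [natDegree_additivePoly]; norm_num)
  have hset : {B : K | B ^ 9 + a * B ^ 3 + b * B = 0} = (additivePoly a b).rootSet K := by
    ext B
    simp [mem_rootSet_of_ne hne, eval_additivePoly]
  rw [hset, Set.ncard_eq_toFinset_card', Set.toFinset_card,
    card_rootSet_eq_natDegree (separable_additivePoly a hb) (IsAlgClosed.splits _),
    natDegree_additivePoly]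

end AdditivePolynomial

section Surface

variable {R : Type*} [CommRing R]

def surfaceLHS (a b x y t₀ t₁ : R) : R :=
  y ^ 2 + x ^ 3 + t₀ ^ 2 * x ^ 2 + t₀ * t₁ ^ 3 * x + t₁ ^ 6 + a * t₀ ^ 3 * t₁ ^ 3 + b * t₀ ^ 5 * t₁

theorem map_surfaceLHS {S F : Type*} [CommRing S] [FunLike F R S] [RingHomClass F R S] (f : F)
    (a b x y t₀ t₁ : R) :
    f (surfaceLHS a b x y t₀ t₁) = surfaceLHS (f a) (f b) (f x) (f y) (f t₀) (f t₁) := by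
  simp only [surfaceLHS, map_add, map_mul, map_pow]

theorem surfaceLHS_shear [CharP R 3] {a b B : R} (hB : B ^ 9 + a * B ^ 3 + b * B = 0)
    (x y t₀ t₁ : R) :
    surfaceLHS a b (x + B ^ 3 * t₀ ^ 2) y t₀ (t₁ + B * t₀) = surfaceLHS a b x y t₀ t₁ := by
  have h3 : (3 : R) = 0 := CharP.cast_eq_zero R 3
  have hx : (x + B ^ 3 * t₀ ^ 2) ^ 3 = x ^ 3 + B ^ 9 * t₀ ^ 6 := by rw [add_pow_char]; ring
  have ht : (t₁ + B * t₀) ^ 3 = t₁ ^ 3 + B ^ 3 * t₀ ^ 3 := by rw [add_pow_char]; ring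
  rw [surfaceLHS, surfaceLHS, hx, show (t₁ + B * t₀) ^ 6 = ((t₁ + B * t₀) ^ 3) ^ 2 by ring, ht]
  linear_combination
    t₀ ^ 6 * hB + (B ^ 3 * t₀ ^ 4 * x + B ^ 3 * t₀ ^ 3 * t₁ ^ 3 + B ^ 6 * t₀ ^ 6) * h3

end Surface

open MvPolynomial

/-- In characteristic 3, the surface
`y^2 + x^3 + t0^2x^2 + t0t1^3x + t1^6 + a t0^3t1^3 + b t0^5t1 = 0` (with `x = X 0`,
`y = X 1`, `t0 = X 2`, `t1 = X 3`) admits, for each `B` with `B^9 + aB^3 + bB = 0`, the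
automorphism `(x,y,t0,t1) ↦ (x + B^3 t0^2, y, t0, t1 + B t0)`; when `b ≠ 0` there are
exactly 9 such `B`, forming a group isomorphic to `(Z/3)^2` under addition. -/
theorem stmt_13 (k : Type*) [Field k] [IsAlgClosed k] [CharP k 3] (a b : k)
    (F : MvPolynomial (Fin 4) k)
    (hF : F = X 1 ^ 2 + X 0 ^ 3 + X 2 ^ 2 * X 0 ^ 2 + X 2 * X 3 ^ 3 * X 0
        + X 3 ^ 6 + C a * X 2 ^ 3 * X 3 ^ 3 + C b * X 2 ^ 5 * X 3) :
    (∀ B : k, B ^ 9 + a * B ^ 3 + b * B = 0 →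
      aeval ![X 0 + C (B ^ 3) * X 2 ^ 2, X 1, X 2, X 3 + C B * X 2] F = F) ∧
    (b ≠ 0 →
      Set.ncard {B : k | B ^ 9 + a * B ^ 3 + b * B = 0} = 9 ∧
      (0 : k) ∈ {B : k | B ^ 9 + a * B ^ 3 + b * B = 0} ∧
      (∀ B B' : k, B ^ 9 + a * B ^ 3 + b * B = 0 → B' ^ 9 + a * B' ^ 3 + b * B' = 0 →
        (B + B') ^ 9 + a * (B + B') ^ 3 + b * (B + B') = 0) ∧
      (∀ B : k, B ^ 9 + a * B ^ 3 + b * B = 0 →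
        (-B) ^ 9 + a * (-B) ^ 3 + b * (-B) = 0)) := by
  replace hF : F = surfaceLHS (C a) (C b) (X 0) (X 1) (X 2) (X 3) := hF
  refine ⟨fun B hB => ?_, fun hb => ⟨ncard_additivePoly_roots a hb, by simp, ?_, ?_⟩⟩
  · have hCB : C B ^ 9 + C a * C B ^ 3 + C b * C B = (0 : MvPolynomial (Fin 4) k) := by
      simpa only [map_add, map_mul, map_pow, map_zero] using congrArg (C (σ := Fin 4)) hB
    rw [hF, map_surfaceLHS]
    simpa using surfaceLHS_shear hCB (X 0) (X 1) (X 2) (X 3)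
  · intro B B' hB hB'
    rw [additivePoly_add, hB, hB', add_zero]
  · intro B hB
    linear_combination -hB
end
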